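/- arXiv:0901.2979 — 3 statements merged into one kernel-verified Lean document; each statement's English description precedes it below -/
import Mathlib

section
/- Let R = ℤ[i][a,h] and A = R[X]/(X² - hX - a). Define ε_W : A → R by ε_W(1) = 0, ε_W(X) = -i, and Δ_W : A → A ⊗ A by Δ_W(1) = i(1⊗X + X⊗1 - h·1⊗1) and Δ_W(X) = i(X⊗X + a·1⊗1). Then (A, multiplication, unit, Δ_W, ε_W) is a commutative (hence symmetric) Frobenius algebra. -/
/-!
`A` is spanned over `R` by `1` and `X`, so every axiom, being `R`-linear in each argument, only
has to be checked on `1` and `X`. Both Frobenius identities come from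
`Δ y = (y ⊗ 1) Δ 1 = Δ 1 (1 ⊗ y)`, which at `y = X` is the relation `X² = hX + a`;
the counit laws at `1` reduce to `-i² = 1`.
-/

open TensorProduct Polynomial

noncomputable section

abbrev Rg : Type := MvPolynomial (Fin 2) GaussianInt

def iR : Rg := MvPolynomial.C ⟨0, 1⟩
def aR : Rg := MvPolynomial.X 0
def hR : Rg := MvPolynomial.X 1

abbrev Aq : Type := AdjoinRoot ((X : Rg[X]) ^ 2 - C hR * X - C aR)

def Xa : Aq := AdjoinRoot.root _

theorem AdjoinRoot.span_one_root_eq_top_of_natDegree_le_two {R : Type*} [CommRing R] {f : R[X]}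
    (hf : f.Monic) (h2 : f.natDegree ≤ 2) : Submodule.span R {1, root f} = ⊤ := by
  refine eq_top_mono (Submodule.span_mono ?_) (powerBasis' hf).basis.span_eq
  rintro _ ⟨⟨k, hk⟩, rfl⟩
  have hk2 : k < 2 := (powerBasis'_dim hf ▸ hk).trans_le h2
  interval_cases k <;> simp

section Quadratic

variable {R : Type*} [CommRing R] (h a : R)

theorem Polynomial.monic_X_sq_sub_C_mul_X_sub_C : (X ^ 2 - C h * X - C a : R[X]).Monic := by
  monicity!

theorem Polynomial.natDegree_X_sq_sub_C_mul_X_sub_C_le :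
    (X ^ 2 - C h * X - C a : R[X]).natDegree ≤ 2 := by
  compute_degree

theorem AdjoinRoot.span_one_root_X_sq_sub_C_mul_X_sub_C :
    Submodule.span R {1, root (X ^ 2 - C h * X - C a)} = ⊤ :=
  span_one_root_eq_top_of_natDegree_le_two (monic_X_sq_sub_C_mul_X_sub_C h a)
    (natDegree_X_sq_sub_C_mul_X_sub_C_le h a)

theorem AdjoinRoot.root_mul_root_X_sq_sub_C_mul_X_sub_C :
    root (X ^ 2 - C h * X - C a) * root (X ^ 2 - C h * X - C a) =
      h • root (X ^ 2 - C h * X - C a) + a • 1 := by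
  have := eval₂_root (X ^ 2 - C h * X - C a)
  simp only [eval₂_sub, eval₂_pow, eval₂_mul, eval₂_X, eval₂_C] at this
  simp only [Algebra.smul_def, algebraMap_eq, mul_one]
  linear_combination this

end Quadratic

section Frobenius

variable {R A : Type*} [CommRing R] [Ring A] [Algebra R A] {Δ : A →ₗ[R] A ⊗[R] A}

theorem comul_mul_eq_tmul_one_mul_of_forall (hΔ : ∀ y, Δ y = (y ⊗ₜ 1) * Δ 1) (y z : A) :
    Δ (y * z) = (y ⊗ₜ 1) * Δ z := by
  rw [hΔ, hΔ z, ← mul_assoc, Algebra.TensorProduct.tmul_mul_tmul, one_mul]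

theorem comul_mul_eq_mul_one_tmul_of_forall (hΔ : ∀ y, Δ y = Δ 1 * (1 ⊗ₜ y)) (y z : A) :
    Δ (y * z) = Δ y * (1 ⊗ₜ z) := by
  rw [hΔ, hΔ y, mul_assoc, Algebra.TensorProduct.tmul_mul_tmul, one_mul]

variable {i h a : R} {x : A} {ε : A →ₗ[R] R}

theorem comul_eq_tmul_one_mul (hspan : Submodule.span R {1, x} = ⊤) (hx : x * x = h • x + a • 1)
    (hΔ1 : Δ 1 = i • ((1 : A) ⊗ₜ x + x ⊗ₜ 1 - h • ((1 : A) ⊗ₜ (1 : A))))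
    (hΔx : Δ x = i • (x ⊗ₜ x + a • ((1 : A) ⊗ₜ (1 : A)))) (y : A) :
    Δ y = (y ⊗ₜ 1) * Δ 1 := by
  refine LinearMap.congr_fun (LinearMap.ext_on hspan (g := LinearMap.mulRight R (Δ 1) ∘ₗ
    Algebra.TensorProduct.includeLeft.toLinearMap) ?_) y
  rintro _ (rfl | rfl)
  · simp [← Algebra.TensorProduct.one_def]
  · simp only [LinearMap.comp_apply, LinearMap.mulRight_apply, AlgHom.toLinearMap_apply,
      Algebra.TensorProduct.includeLeft_apply, hΔ1, hΔx, mul_smul_comm, mul_sub, mul_add,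
      Algebra.TensorProduct.tmul_mul_tmul, mul_one, one_mul, hx, add_tmul, smul_tmul']
    module

theorem comul_eq_mul_one_tmul (hspan : Submodule.span R {1, x} = ⊤) (hx : x * x = h • x + a • 1)
    (hΔ1 : Δ 1 = i • ((1 : A) ⊗ₜ x + x ⊗ₜ 1 - h • ((1 : A) ⊗ₜ (1 : A))))
    (hΔx : Δ x = i • (x ⊗ₜ x + a • ((1 : A) ⊗ₜ (1 : A)))) (y : A) :
    Δ y = Δ 1 * (1 ⊗ₜ y) := by
  refine LinearMap.congr_fun (LinearMap.ext_on hspan (g := LinearMap.mulLeft R (Δ 1) ∘ₗ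
    Algebra.TensorProduct.includeRight.toLinearMap) ?_) y
  rintro _ (rfl | rfl)
  · simp [← Algebra.TensorProduct.one_def]
  · simp only [LinearMap.comp_apply, LinearMap.mulLeft_apply, AlgHom.toLinearMap_apply,
      Algebra.TensorProduct.includeRight_apply, hΔ1, hΔx, smul_mul_assoc, sub_mul, add_mul,
      Algebra.TensorProduct.tmul_mul_tmul, mul_one, one_mul, hx, tmul_add, tmul_smul, smul_tmul']
    module

theorem assoc_map_comul_id_comul (hspan : Submodule.span R {1, x} = ⊤)
    (hΔ1 : Δ 1 = i • ((1 : A) ⊗ₜ x + x ⊗ₜ 1 - h • ((1 : A) ⊗ₜ (1 : A))))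
    (hΔx : Δ x = i • (x ⊗ₜ x + a • ((1 : A) ⊗ₜ (1 : A)))) (y : A) :
    TensorProduct.assoc R A A A (map Δ LinearMap.id (Δ y)) = map LinearMap.id Δ (Δ y) := by
  refine LinearMap.congr_fun (LinearMap.ext_on hspan
    (f := (TensorProduct.assoc R A A A).toLinearMap ∘ₗ map Δ LinearMap.id ∘ₗ Δ)
    (g := map LinearMap.id Δ ∘ₗ Δ) ?_) y
  rintro _ (rfl | rfl) <;>
  · simp only [LinearMap.comp_apply, LinearEquiv.coe_coe, map_smul, map_sub, map_add, hΔ1, hΔx,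
      map_tmul, assoc_tmul, LinearMap.id_apply, tmul_add, add_tmul, tmul_sub, sub_tmul,
      tmul_smul, ← smul_tmul']
    module

theorem lid_map_counit_id_comul (hspan : Submodule.span R {1, x} = ⊤) (hi : i * i = -1)
    (hε1 : ε 1 = 0) (hεx : ε x = -i)
    (hΔ1 : Δ 1 = i • ((1 : A) ⊗ₜ x + x ⊗ₜ 1 - h • ((1 : A) ⊗ₜ (1 : A))))
    (hΔx : Δ x = i • (x ⊗ₜ x + a • ((1 : A) ⊗ₜ (1 : A)))) (y : A) :
    TensorProduct.lid R A (map ε LinearMap.id (Δ y)) = y := by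
  refine LinearMap.congr_fun (LinearMap.ext_on hspan
    (f := (TensorProduct.lid R A).toLinearMap ∘ₗ map ε LinearMap.id ∘ₗ Δ)
    (g := LinearMap.id) ?_) y
  rintro _ (rfl | rfl) <;>
  · simp only [LinearMap.comp_apply, LinearEquiv.coe_coe, map_smul, map_sub, map_add, hΔ1, hΔx,
      map_tmul, hε1, hεx, lid_tmul, LinearMap.id_apply, zero_smul, smul_zero, add_zero]
    match_scalars
    linear_combination -hi

theorem rid_map_id_counit_comul (hspan : Submodule.span R {1, x} = ⊤) (hi : i * i = -1)
    (hε1 : ε 1 = 0) (hεx : ε x = -i)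
    (hΔ1 : Δ 1 = i • ((1 : A) ⊗ₜ x + x ⊗ₜ 1 - h • ((1 : A) ⊗ₜ (1 : A))))
    (hΔx : Δ x = i • (x ⊗ₜ x + a • ((1 : A) ⊗ₜ (1 : A)))) (y : A) :
    TensorProduct.rid R A (map LinearMap.id ε (Δ y)) = y := by
  refine LinearMap.congr_fun (LinearMap.ext_on hspan
    (f := (TensorProduct.rid R A).toLinearMap ∘ₗ map LinearMap.id ε ∘ₗ Δ)
    (g := LinearMap.id) ?_) y
  rintro _ (rfl | rfl) <;>
  · simp only [LinearMap.comp_apply, LinearEquiv.coe_coe, map_smul, map_sub, map_add, hΔ1, hΔx,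
      map_tmul, hε1, hεx, rid_tmul, LinearMap.id_apply, zero_smul, smul_zero, add_zero]
    match_scalars
    linear_combination -hi

end Frobenius

theorem iR_mul_iR : iR * iR = -1 := by
  rw [iR, ← map_mul, show (⟨0, 1⟩ : GaussianInt) * ⟨0, 1⟩ = -1 by decide, map_neg, map_one]

/-- with `ε_W(1)=0, ε_W(X)=-i, Δ_W(1)=i(1⊗X+X⊗1-h·1⊗1),
Δ_W(X)=i(X⊗X+a·1⊗1)`, the algebra `A = R[X]/(X²-hX-a)` is a commutative
(hence symmetric) Frobenius algebra. -/
theorem stmt_1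
    (εW : Aq →ₗ[Rg] Rg) (ΔW : Aq →ₗ[Rg] Aq ⊗[Rg] Aq)
    (hε1 : εW 1 = 0) (hεX : εW Xa = -iR)
    (hΔ1 : ΔW 1 = iR • ((1 : Aq) ⊗ₜ[Rg] Xa + Xa ⊗ₜ[Rg] (1 : Aq)
        - hR • ((1 : Aq) ⊗ₜ[Rg] (1 : Aq))))
    (hΔX : ΔW Xa = iR • (Xa ⊗ₜ[Rg] Xa + aR • ((1 : Aq) ⊗ₜ[Rg] (1 : Aq)))) :
    (∀ x y : Aq, x * y = y * x) ∧
    (∀ x y : Aq, εW (x * y) = εW (y * x)) ∧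
    (∀ x y : Aq, ΔW (x * y) = (x ⊗ₜ[Rg] (1 : Aq)) * ΔW y) ∧
    (∀ x y : Aq, ΔW (x * y) = ΔW x * ((1 : Aq) ⊗ₜ[Rg] y)) ∧
    (∀ x : Aq, (TensorProduct.assoc Rg Aq Aq Aq)
        ((TensorProduct.map ΔW (LinearMap.id : Aq →ₗ[Rg] Aq)) (ΔW x)) =
      (TensorProduct.map (LinearMap.id : Aq →ₗ[Rg] Aq) ΔW) (ΔW x)) ∧
    (∀ x : Aq, (TensorProduct.lid Rg Aq)
        ((TensorProduct.map εW (LinearMap.id : Aq →ₗ[Rg] Aq)) (ΔW x)) = x) ∧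
    (∀ x : Aq, (TensorProduct.rid Rg Aq)
        ((TensorProduct.map (LinearMap.id : Aq →ₗ[Rg] Aq) εW) (ΔW x)) = x) := by
  have hspan : Submodule.span Rg {1, Xa} = ⊤ :=
    AdjoinRoot.span_one_root_X_sq_sub_C_mul_X_sub_C hR aR
  have hXa : Xa * Xa = hR • Xa + aR • 1 := AdjoinRoot.root_mul_root_X_sq_sub_C_mul_X_sub_C hR aR
  exact ⟨mul_comm, fun x y => congrArg εW (mul_comm x y),
    comul_mul_eq_tmul_one_mul_of_forall (comul_eq_tmul_one_mul hspan hXa hΔ1 hΔX),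
    comul_mul_eq_mul_one_tmul_of_forall (comul_eq_mul_one_tmul hspan hXa hΔ1 hΔX),
    assoc_map_comul_id_comul hspan hΔ1 hΔX,
    lid_map_counit_id_comul hspan iR_mul_iR hε1 hεX hΔ1 hΔX,
    rid_map_id_counit_comul hspan iR_mul_iR hε1 hεX hΔ1 hΔX⟩
end
end

section
/- Let (C, W, z, z*) be a twin Frobenius algebra in the category of modules over a commutative ring R containing i with i² = -1. Then z* : W → C is a homomorphism of coalgebra objects, i.e., (z* ⊗ z*)∘Δ_W = Δ_C∘z* and ε_C∘z* = ε_W. -/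
open TensorProduct

noncomputable section

/-- A Frobenius algebra structure on an `R`-algebra `A`: a coassociative
comultiplication `Δ` with counit `ε` satisfying the Frobenius (bimodule) condition. -/
structure FrobeniusStr (R A : Type*) [CommRing R] [Ring A] [Algebra R A] where
  Δ : A →ₗ[R] A ⊗[R] A
  ε : A →ₗ[R] R
  coassoc : ∀ x : A,
    (TensorProduct.assoc R A A A)
        ((TensorProduct.map Δ (LinearMap.id : A →ₗ[R] A)) (Δ x)) =
      (TensorProduct.map (LinearMap.id : A →ₗ[R] A) Δ) (Δ x)
  counit_left : ∀ x : A,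
    (TensorProduct.lid R A) ((TensorProduct.map ε (LinearMap.id : A →ₗ[R] A)) (Δ x)) = x
  counit_right : ∀ x : A,
    (TensorProduct.rid R A) ((TensorProduct.map (LinearMap.id : A →ₗ[R] A) ε) (Δ x)) = x
  frob_left : ∀ x y : A, Δ (x * y) = (x ⊗ₜ[R] (1 : A)) * Δ y
  frob_right : ∀ x y : A, Δ (x * y) = Δ x * ((1 : A) ⊗ₜ[R] y)

/-- A twin Frobenius algebra `(C, W, z, z*)` over `R` (with distinguished
element `I` playing the role of `i`): `C` a commutative Frobenius algebra,
`W` a symmetric Frobenius algebra, `z : C → W` an algebra homomorphism,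
`z* : W → C` its dual, satisfying duality, centrality and the isomorphism
conditions. -/
structure TwinFrobenius (R C W : Type*) [CommRing R] [CommRing C] [Ring W]
    [Algebra R C] [Algebra R W] (I : R) where
  frobC : FrobeniusStr R C
  frobW : FrobeniusStr R W
  symmW : ∀ w₁ w₂ : W, frobW.ε (w₁ * w₂) = frobW.ε (w₂ * w₁)
  z : C →ₐ[R] W
  zs : W →ₗ[R] C
  duality : ∀ (c : C) (w : W), frobC.ε (c * zs w) = frobW.ε (z c * w)
  central : ∀ (c : C) (w : W), w * z c = z c * w
  iso_left : ∀ c : C, I • zs (z c) = c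
  iso_right : ∀ w : W, z (I • zs w) = w

/-!
Pair both sides of the comultiplication identity with `c ∈ C` through the Frobenius form
`⟨a, x⟩ = ε_C (a * x)` in the first tensor factor. For `Δ_C (z* w)` this gives `c * z* w`; for
`(z* ⊗ z*) (Δ_W w)` duality moves the pairing to `W`, where the Frobenius law gives
`z* (z c * w)`. These agree because `z*` is `C`-linear, which is duality once more together with
multiplicativity of `z`. The pairing is nondegenerate, even after tensoring with any module, because
`Δ 1` is a copairing for it. The counit identity is duality at `c = 1`.
-/

namespace FrobeniusStr

variable {R A : Type*} [CommRing R] [Ring A] [Algebra R A] (F : FrobeniusStr R A)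
variable (M : Type*) [AddCommGroup M] [Module R M]

def contractLeft : A ⊗[R] M →ₗ[R] A →ₗ[R] M :=
  dualTensorHom R A M ∘ₗ TensorProduct.map ((LinearMap.mul R A).flip.compr₂ F.ε) LinearMap.id

variable {M}

@[simp]
lemma contractLeft_tmul (x a : A) (m : M) :
    F.contractLeft M (x ⊗ₜ m) a = F.ε (a * x) • m := by
  simp [contractLeft]

lemma rid_map_counit_comul_one_mul (x : A) :
    TensorProduct.rid R A (TensorProduct.map LinearMap.id F.ε (F.Δ 1 * (1 ⊗ₜ x))) = x := by
  rw [← F.frob_right, one_mul, F.counit_right]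

-- With `Δ 1 = ∑ aᵢ ⊗ bᵢ`, the previous lemma reads `x = ∑ aᵢ * ε (bᵢ * x)`.
lemma lTensor_contractLeft_comul_one (t : A ⊗[R] M) :
    (F.contractLeft M t).lTensor A (F.Δ 1) = t := by
  induction t using TensorProduct.induction_on with
  | zero => simp
  | add t t' ht ht' => rw [map_add, LinearMap.lTensor_add, LinearMap.add_apply, ht, ht']
  | tmul x m =>
    conv_rhs => rw [← F.rid_map_counit_comul_one_mul x]
    induction F.Δ 1 using TensorProduct.induction_on with
    | zero => simp
    | tmul a b => simp [Algebra.TensorProduct.tmul_mul_tmul, TensorProduct.smul_tmul]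
    | add p q hp hq => simp [add_mul, hp, hq, TensorProduct.add_tmul]

lemma tensor_ext {t t' : A ⊗[R] M} (h : ∀ a, F.contractLeft M t a = F.contractLeft M t' a) :
    t = t' := by
  rw [← F.lTensor_contractLeft_comul_one t, ← F.lTensor_contractLeft_comul_one t',
    LinearMap.ext h]

lemma ext_of_counit_mul {x y : A} (h : ∀ a, F.ε (a * x) = F.ε (a * y)) : x = y := by
  have : x ⊗ₜ[R] (1 : R) = y ⊗ₜ (1 : R) := F.tensor_ext fun a => by simp [h a]
  simpa using congrArg (TensorProduct.rid R A) this

lemma contractLeft_eq_lid_map_counit (t : A ⊗[R] A) (a : A) :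
    F.contractLeft A t a =
      TensorProduct.lid R A (TensorProduct.map F.ε LinearMap.id ((a ⊗ₜ 1) * t)) := by
  induction t using TensorProduct.induction_on with
  | zero => simp
  | tmul x y => simp [Algebra.TensorProduct.tmul_mul_tmul]
  | add t t' ht ht' => simp [mul_add, ht, ht']

lemma contractLeft_comul (x a : A) : F.contractLeft A (F.Δ x) a = a * x := by
  rw [contractLeft_eq_lid_map_counit, ← F.frob_left, F.counit_left]

end FrobeniusStr

namespace TwinFrobenius

variable {R C W : Type*} [CommRing R] [CommRing C] [Ring W] [Algebra R C] [Algebra R W] {I : R}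
  (T : TwinFrobenius R C W I)

lemma counit_zs (w : W) : T.frobC.ε (T.zs w) = T.frobW.ε w := by
  simpa using T.duality 1 w

lemma zs_z_mul (c : C) (w : W) : T.zs (T.z c * w) = c * T.zs w :=
  T.frobC.ext_of_counit_mul fun a => by
    rw [T.duality, ← mul_assoc, ← mul_assoc, T.duality, map_mul T.z]

lemma contractLeft_map_zs (t : W ⊗[R] W) (c : C) :
    T.frobC.contractLeft C (TensorProduct.map T.zs T.zs t) c =
      T.zs (T.frobW.contractLeft W t (T.z c)) := by
  induction t using TensorProduct.induction_on with
  | zero => simp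
  | tmul x y => simp [T.duality]
  | add t t' ht ht' => simp [ht, ht']

lemma map_zs_comul (w : W) :
    TensorProduct.map T.zs T.zs (T.frobW.Δ w) = T.frobC.Δ (T.zs w) :=
  T.frobC.tensor_ext fun c => by
    rw [contractLeft_map_zs, FrobeniusStr.contractLeft_comul, FrobeniusStr.contractLeft_comul,
      zs_z_mul]

end TwinFrobenius

theorem stmt_6_general {R C W : Type*} [CommRing R] [CommRing C] [Ring W]
    [Algebra R C] [Algebra R W] (I : R)
    (T : TwinFrobenius R C W I) :
    (∀ w : W, (TensorProduct.map T.zs T.zs) (T.frobW.Δ w) = T.frobC.Δ (T.zs w)) ∧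
    (∀ w : W, T.frobC.ε (T.zs w) = T.frobW.ε w) :=
  ⟨T.map_zs_comul, T.counit_zs⟩

/-- in a twin Frobenius algebra, `z*` is a homomorphism of
coalgebra objects: `(z*⊗z*)∘Δ_W = Δ_C∘z*` and `ε_C∘z* = ε_W`. -/
theorem stmt_6 {R C W : Type*} [CommRing R] [CommRing C] [Ring W]
    [Algebra R C] [Algebra R W] (I : R) (hI : I * I = -1)
    (T : TwinFrobenius R C W I) :
    (∀ w : W, (TensorProduct.map T.zs T.zs) (T.frobW.Δ w) = T.frobC.Δ (T.zs w)) ∧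
    (∀ w : W, T.frobC.ε (T.zs w) = T.frobW.ε w) :=
  stmt_6_general I T
end
end

section
/- Let S be a commutative ring containing i, n ≥ 2, C = S[x]/(xⁿ) and W = S[y]/(yⁿ) with the Frobenius structures ε_C(x^{n-1})=1, Δ_C(x^k) = Σ_{j=0}^{n-1-k} x^{j+k}⊗x^{n-1-j}, and ε_W(y^{n-1}) = -i, Δ_W(y^k) = i·Σ_{j=0}^{n-1-k} y^{j+k}⊗y^{n-1-j} (all other counit values zero). Define z : C → W by z(x^k)=y^k and z* : W → C by z*(y^k) = -i·x^k. Then (C, W, z, z*) is a twin Frobenius algebra: z is an algebra homomorphism, ε_C(c·z*(w)) = ε_W(z(c)·w), z(c)·w = w·z(c), (iz*)∘z = id_C, and z∘(iz*) = id_W. -/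
open TensorProduct

noncomputable section

/-- The truncated polynomial algebra `S[x]/(xⁿ)`. -/
abbrev TruncPoly (S : Type) [CommRing S] (n : ℕ) : Type :=
  AdjoinRoot ((Polynomial.X : Polynomial S) ^ n)

/-- The class of `x` in `S[x]/(xⁿ)`. -/
def xTr (S : Type) [CommRing S] (n : ℕ) : TruncPoly S n := AdjoinRoot.root _

/- With `z = id` and `z* = -i • id`, the twin Frobenius axioms reduce to `i • (-i) = 1`
and the identity `ε_W = -i • ε_C`. Each of these three equalities of linear maps holds
because it holds on the basis `1, x, …, x^{n-1}` of `S[x]/(xⁿ)`. -/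

theorem AdjoinRoot.linearMap_ext_of_monic {R : Type*} [CommRing R] {f : Polynomial R}
    (hf : f.Monic) {M : Type*} [AddCommMonoid M] [Module R M]
    {φ ψ : AdjoinRoot f →ₗ[R] M} (h : ∀ k < f.natDegree, φ (root f ^ k) = ψ (root f ^ k)) :
    φ = ψ :=
  (powerBasis' hf).basis.ext fun i => by
    simpa only [PowerBasis.basis_eq_pow, powerBasis'_gen] using h i i.isLt

namespace TruncPoly

variable {S : Type} [CommRing S] {n : ℕ}

theorem linearMap_ext {M : Type*} [AddCommMonoid M] [Module S M]
    {φ ψ : TruncPoly S n →ₗ[S] M}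
    (h : ∀ k ≤ n - 1, φ (xTr S n ^ k) = ψ (xTr S n ^ k)) : φ = ψ :=
  AdjoinRoot.linearMap_ext_of_monic (Polynomial.monic_X_pow n) fun k hk =>
    h k (by have := Polynomial.natDegree_X_pow_le (R := S) n; omega)

theorem eq_smul_of_top {φ ψ : TruncPoly S n →ₗ[S] S} (c : S)
    (hφ : ∀ k ≤ n - 2, φ (xTr S n ^ k) = 0) (hψ : ∀ k ≤ n - 2, ψ (xTr S n ^ k) = 0)
    (htop : ψ (xTr S n ^ (n - 1)) = c * φ (xTr S n ^ (n - 1))) : ψ = c • φ := by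
  refine linearMap_ext fun k hk => ?_
  rcases Nat.lt_or_ge k (n - 1) with hlt | hge
  · simp [hφ k (by omega), hψ k (by omega)]
  · obtain rfl : k = n - 1 := le_antisymm hk hge
    exact htop

end TruncPoly

theorem stmt_10_general {S : Type} [CommRing S] (I : S) (hI : I * I = -1)
    (n : ℕ)
    (εC εW : TruncPoly S n →ₗ[S] S)
    (hεCtop : εC ((xTr S n) ^ (n - 1)) = 1)
    (hεClow : ∀ k : ℕ, k ≤ n - 2 → εC ((xTr S n) ^ k) = 0)
    (hεWtop : εW ((xTr S n) ^ (n - 1)) = -I)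
    (hεWlow : ∀ k : ℕ, k ≤ n - 2 → εW ((xTr S n) ^ k) = 0)
    (z zs : TruncPoly S n →ₗ[S] TruncPoly S n)
    (hz : ∀ k : ℕ, k ≤ n - 1 → z ((xTr S n) ^ k) = (xTr S n) ^ k)
    (hzs : ∀ k : ℕ, k ≤ n - 1 → zs ((xTr S n) ^ k) = (-I) • (xTr S n) ^ k) :
    (∀ x y : TruncPoly S n, z (x * y) = z x * z y) ∧
    z 1 = 1 ∧
    (∀ (c w : TruncPoly S n), εC (c * zs w) = εW (z c * w)) ∧
    (∀ (c w : TruncPoly S n), w * z c = z c * w) ∧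
    (∀ c : TruncPoly S n, I • zs (z c) = c) ∧
    (∀ w : TruncPoly S n, z (I • zs w) = w) := by
  obtain rfl := TruncPoly.linearMap_ext (ψ := LinearMap.id) hz
  obtain rfl := TruncPoly.linearMap_ext (φ := zs) (ψ := (-I) • LinearMap.id) hzs
  obtain rfl := TruncPoly.eq_smul_of_top (-I) hεClow hεWlow (by rw [hεWtop, hεCtop, mul_one])
  refine ⟨fun _ _ => rfl, rfl, fun c w => ?_, fun _ _ => mul_comm _ _, fun c => ?_, fun w => ?_⟩
  · simp
  all_goals simp [smul_smul, hI]

/-- with `C = S[x]/(xⁿ)` and `W = S[y]/(yⁿ)` carrying the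
Frobenius structures `ε_C(x^{n-1})=1`, `Δ_C(x^k)=Σ x^{j+k}⊗x^{n-1-j}`,
`ε_W(y^{n-1})=-i`, `Δ_W(y^k)=i·Σ y^{j+k}⊗y^{n-1-j}`, the maps `z(x^k)=y^k` and
`z*(y^k)=-i·x^k` make `(C, W, z, z*)` a twin Frobenius algebra: `z` is an
algebra homomorphism, duality, centrality, and the isomorphism conditions hold. -/
theorem stmt_10 {S : Type} [CommRing S] (I : S) (hI : I * I = -1)
    (n : ℕ) (hn : 2 ≤ n)
    (εC εW : TruncPoly S n →ₗ[S] S)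
    (ΔC ΔW : TruncPoly S n →ₗ[S] TruncPoly S n ⊗[S] TruncPoly S n)
    (hεCtop : εC ((xTr S n) ^ (n - 1)) = 1)
    (hεClow : ∀ k : ℕ, k ≤ n - 2 → εC ((xTr S n) ^ k) = 0)
    (hΔC : ∀ k : ℕ, k ≤ n - 1 → ΔC ((xTr S n) ^ k) =
      ∑ j ∈ Finset.range (n - k), ((xTr S n) ^ (j + k)) ⊗ₜ[S] ((xTr S n) ^ (n - 1 - j)))
    (hεWtop : εW ((xTr S n) ^ (n - 1)) = -I)
    (hεWlow : ∀ k : ℕ, k ≤ n - 2 → εW ((xTr S n) ^ k) = 0)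
    (hΔW : ∀ k : ℕ, k ≤ n - 1 → ΔW ((xTr S n) ^ k) =
      I • ∑ j ∈ Finset.range (n - k), ((xTr S n) ^ (j + k)) ⊗ₜ[S] ((xTr S n) ^ (n - 1 - j)))
    (z zs : TruncPoly S n →ₗ[S] TruncPoly S n)
    (hz : ∀ k : ℕ, k ≤ n - 1 → z ((xTr S n) ^ k) = (xTr S n) ^ k)
    (hzs : ∀ k : ℕ, k ≤ n - 1 → zs ((xTr S n) ^ k) = (-I) • (xTr S n) ^ k) :
    (∀ x y : TruncPoly S n, z (x * y) = z x * z y) ∧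
    z 1 = 1 ∧
    (∀ (c w : TruncPoly S n), εC (c * zs w) = εW (z c * w)) ∧
    (∀ (c w : TruncPoly S n), w * z c = z c * w) ∧
    (∀ c : TruncPoly S n, I • zs (z c) = c) ∧
    (∀ w : TruncPoly S n, z (I • zs w) = w) :=
  stmt_10_general I hI n εC εW hεCtop hεClow hεWtop hεWlow z zs hz hzs
end
end
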